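/- arXiv:2605.03954 — 4 statements merged into one kernel-verified Lean document; each statement's English description precedes it below -/
import Mathlib

section
/- Given a support system (T, L, src, supp), define the SETAF S with arguments A = T ∪ {a_{ℓ,s} : ℓ ∈ L, s ∈ src(ℓ)} (auxiliary arguments disjoint from T) and attacks: ({a_{ℓ,s}}, s), ({a_{ℓ,s}}, a_{ℓ,s}) for each ℓ ∈ L and s ∈ src(ℓ), and (S, a_{ℓ,s}) for each S ∈ supp(ℓ,s). Then P ⊆ T is the unique maximal closed set of the support system if and only if P is a preferred extension of S; moreover S has exactly one preferred extension. -/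
/-- Conflict-freeness in a SETAF. -/
def SetafConflictFree {A : Type} (R : Set A → A → Prop) (E : Set A) : Prop :=
  ¬ ∃ S a, R S a ∧ S ⊆ E ∧ a ∈ E

/-- Defense in a SETAF. -/
def SetafDefends {A : Type} (R : Set A → A → Prop) (E : Set A) (a : A) : Prop :=
  ∀ S, R S a → ∃ S' ⊆ E, ∃ b ∈ S, R S' b

def SetafAdmissible {A : Type} (R : Set A → A → Prop) (E : Set A) : Prop :=
  SetafConflictFree R E ∧ ∀ a ∈ E, SetafDefends R E a

def SetafNaive {A : Type} (R : Set A → A → Prop) (E : Set A) : Prop :=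
  SetafConflictFree R E ∧ ∀ E', SetafConflictFree R E' → E ⊆ E' → E' = E

def SetafPreferred {A : Type} (R : Set A → A → Prop) (E : Set A) : Prop :=
  SetafAdmissible R E ∧ ∀ E', SetafAdmissible R E' → E ⊆ E' → E' = E

def SetafStable {A : Type} (R : Set A → A → Prop) (E : Set A) : Prop :=
  SetafConflictFree R E ∧ ∀ a ∉ E, ∃ S ⊆ E, R S a

/-- `P` is closed in the support system. -/
def Closed {L Fact : Type} (src : L → Set Fact)
    (supp : L → Fact → Set (Set Fact)) (P : Set Fact) : Prop :=
  ∀ ℓ, ∀ s ∈ P, s ∈ src ℓ → ∃ S ∈ supp ℓ s, S ⊆ P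

/-- Auxiliary arguments `a_{ℓ,s}` for `ℓ ∈ L` and `s ∈ src ℓ`. -/
def Aux {L Fact : Type} (src : L → Set Fact) : Type :=
  {p : L × Fact // p.2 ∈ src p.1}

/-- Arguments of the SETAF generated by a support system: the facts together
with the auxiliary arguments. -/
def Arg {L Fact : Type} (src : L → Set Fact) : Type :=
  Fact ⊕ Aux src

/-- Attacks of the SETAF generated by a support system: `({a_{ℓ,s}}, s)`,
`({a_{ℓ,s}}, a_{ℓ,s})`, and `(S, a_{ℓ,s})` for every `S ∈ supp ℓ s`. -/
def Att {L Fact : Type} (src : L → Set Fact) (supp : L → Fact → Set (Set Fact))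
    (S : Set (Arg src)) (x : Arg src) : Prop :=
  (∃ a : Aux src, S = {Sum.inr a} ∧ (x = Sum.inr a ∨ x = Sum.inl a.1.2)) ∨
  (∃ a : Aux src, ∃ U ∈ supp a.1.1 a.1.2, S = Sum.inl '' U ∧ x = Sum.inr a)

/-!
Closed sets are closed under arbitrary unions, so there is a greatest closed set `M`.
In the generated SETAF every auxiliary argument `a_{ℓ,s}` attacks itself, so an admissible set
consists of facts only; a fact `s` is attacked exactly by the `a_{ℓ,s}`, and `a_{ℓ,s}` is
counter-attacked exactly by the supports in `supp ℓ s`. Hence the admissible extensions are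
exactly the images of the closed sets, and the unique preferred extension is the image of `M`.
-/

section SupportSystem

variable {L Fact : Type} {src : L → Set Fact} {supp : L → Fact → Set (Set Fact)}

theorem closed_sUnion {𝒬 : Set (Set Fact)} (h𝒬 : ∀ Q ∈ 𝒬, Closed src supp Q) :
    Closed src supp (⋃₀ 𝒬) := by
  rintro ℓ s ⟨Q, hQ, hsQ⟩ hsrc
  obtain ⟨S, hS, hSQ⟩ := h𝒬 Q hQ ℓ s hsQ hsrc
  exact ⟨S, hS, hSQ.trans (Set.subset_sUnion_of_mem hQ)⟩

variable (src supp) in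
def maxClosed : Set Fact := ⋃₀ {Q | Closed src supp Q}

theorem closed_maxClosed : Closed src supp (maxClosed src supp) :=
  closed_sUnion fun _ hQ => hQ

theorem subset_maxClosed {Q : Set Fact} (hQ : Closed src supp Q) : Q ⊆ maxClosed src supp :=
  Set.subset_sUnion_of_mem hQ

theorem isGreatest_closed_iff_eq_maxClosed {P : Set Fact} :
    (Closed src supp P ∧ ∀ Q, Closed src supp Q → Q ⊆ P) ↔ P = maxClosed src supp := by
  constructor
  · rintro ⟨hP, hmax⟩
    exact (subset_maxClosed hP).antisymm (hmax _ closed_maxClosed)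
  · rintro rfl
    exact ⟨closed_maxClosed, fun _ => subset_maxClosed⟩

end SupportSystem

section GeneratedSetaf

variable {L Fact : Type} {src : L → Set Fact} {supp : L → Fact → Set (Set Fact)}

theorem att_inl_iff {S : Set (Arg src)} {s : Fact} :
    Att src supp S (Sum.inl s) ↔ ∃ a : Aux src, a.1.2 = s ∧ S = {Sum.inr a} := by
  constructor
  · rintro (⟨a, hS, h | h⟩ | ⟨a, U, -, -, h⟩)
    · exact absurd h Sum.inl_ne_inr
    · exact ⟨a, (Sum.inl.inj h).symm, hS⟩
    · exact absurd h Sum.inl_ne_inr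
  · rintro ⟨a, rfl, hS⟩
    exact Or.inl ⟨a, hS, Or.inr rfl⟩

theorem att_inr_iff {S : Set (Arg src)} {a : Aux src} :
    Att src supp S (Sum.inr a) ↔
      S = {Sum.inr a} ∨ ∃ U ∈ supp a.1.1 a.1.2, S = Sum.inl '' U := by
  constructor
  · rintro (⟨b, hS, h | h⟩ | ⟨b, U, hU, hS, h⟩)
    · obtain rfl : a = b := Sum.inr.inj h
      exact Or.inl hS
    · exact absurd h Sum.inr_ne_inl
    · obtain rfl : a = b := Sum.inr.inj h
      exact Or.inr ⟨U, hU, hS⟩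
  · rintro (hS | ⟨U, hU, hS⟩)
    exacts [Or.inl ⟨a, hS, Or.inl rfl⟩, Or.inr ⟨a, U, hU, hS, rfl⟩]

theorem inr_notMem_of_conflictFree {E : Set (Arg src)}
    (hE : SetafConflictFree (Att src supp) E) (a : Aux src) : Sum.inr a ∉ E := fun ha =>
  hE ⟨{Sum.inr a}, Sum.inr a, att_inr_iff.2 (Or.inl rfl), Set.singleton_subset_iff.2 ha, ha⟩

theorem SetafAdmissible.exists_closed {E : Set (Arg src)}
    (hE : SetafAdmissible (Att src supp) E) :
    ∃ P : Set Fact, Closed src supp P ∧ E = Sum.inl '' P := by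
  obtain ⟨hcf, hdef⟩ := hE
  have hE_inl : E ⊆ Set.range Sum.inl := by
    rintro (s | a) hx
    · exact ⟨s, rfl⟩
    · exact absurd hx (inr_notMem_of_conflictFree hcf a)
  refine ⟨Sum.inl ⁻¹' E, fun ℓ s hs hsrc => ?_, (Set.image_preimage_eq_of_subset hE_inl).symm⟩
  let a : Aux src := ⟨(ℓ, s), hsrc⟩
  obtain ⟨S', hS'E, b, rfl, hS'⟩ := hdef _ hs {Sum.inr a} (att_inl_iff.2 ⟨a, rfl, rfl⟩)
  rcases att_inr_iff.1 hS' with rfl | ⟨U, hU, rfl⟩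
  · exact absurd (hS'E rfl) (inr_notMem_of_conflictFree hcf a)
  · exact ⟨U, hU, Set.image_subset_iff.1 hS'E⟩

theorem Closed.setafAdmissible_image_inl {P : Set Fact} (hP : Closed src supp P) :
    SetafAdmissible (Att src supp) (Sum.inl '' P) := by
  have inr_notMem (a : Aux src) : Sum.inr a ∉ Sum.inl '' P := by simp
  constructor
  · rintro ⟨S, (s | a), hatt, hSP, hx⟩
    · obtain ⟨a, -, rfl⟩ := att_inl_iff.1 hatt
      exact inr_notMem a (hSP rfl)
    · exact inr_notMem a hx
  · rintro _ ⟨s, hsP, rfl⟩ S hatt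
    obtain ⟨a, rfl, rfl⟩ := att_inl_iff.1 hatt
    obtain ⟨U, hU, hUP⟩ := hP a.1.1 a.1.2 hsP a.2
    exact ⟨Sum.inl '' U, Set.image_mono hUP, Sum.inr a, rfl, att_inr_iff.2 (Or.inr ⟨U, hU, rfl⟩)⟩

theorem setafPreferred_iff_eq_image_maxClosed {E : Set (Arg src)} :
    SetafPreferred (Att src supp) E ↔ E = Sum.inl '' maxClosed src supp := by
  constructor
  · rintro ⟨hadm, hmax⟩
    obtain ⟨P, hP, rfl⟩ := hadm.exists_closed
    exact (hmax _ closed_maxClosed.setafAdmissible_image_inl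
      (Set.image_mono (subset_maxClosed hP))).symm
  · rintro rfl
    refine ⟨closed_maxClosed.setafAdmissible_image_inl, fun E' hE' hsub => ?_⟩
    obtain ⟨Q, hQ, rfl⟩ := hE'.exists_closed
    exact (Set.image_mono (subset_maxClosed hQ)).antisymm hsub

end GeneratedSetaf

theorem stmt9_general {L Fact : Type}
    (src : L → Set Fact) (supp : L → Fact → Set (Set Fact)) :
    (∀ P : Set Fact,
      (Closed src supp P ∧ ∀ Q, Closed src supp Q → Q ⊆ P) ↔
        SetafPreferred (Att src supp) ((Sum.inl : Fact → Arg src) '' P)) ∧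
    (∃! E : Set (Arg src), SetafPreferred (Att src supp) E) := by
  refine ⟨fun P => ?_, ⟨_, setafPreferred_iff_eq_image_maxClosed.2 rfl,
    fun _ => setafPreferred_iff_eq_image_maxClosed.1⟩⟩
  rw [isGreatest_closed_iff_eq_maxClosed, setafPreferred_iff_eq_image_maxClosed]
  exact (Set.image_eq_image Sum.inl_injective).symm

/-- A subset `P` of the facts is the unique maximal closed set of the support
system iff its image is a preferred extension of the generated SETAF; moreover
the SETAF has exactly one preferred extension. -/
theorem stmt9 {L Fact : Type} [Fintype L] [Fintype Fact]
    (src : L → Set Fact) (supp : L → Fact → Set (Set Fact)) :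
    (∀ P : Set Fact,
      (Closed src supp P ∧ ∀ Q, Closed src supp Q → Q ⊆ P) ↔
        SetafPreferred (Att src supp) ((Sum.inl : Fact → Arg src) '' P)) ∧
    (∃! E : Set (Arg src), SetafPreferred (Att src supp) E) :=
  stmt9_general src supp
end

section
/- In the SETAF S built from a support system, a subset P ⊆ T is admissible if and only if P is closed (every s ∈ P ∩ src(ℓ) has a supporting set S ∈ supp(ℓ,s) with S ⊆ P). -/
/-! The only attacks launched by sets of facts are the support attacks `(S, a_{ℓ,s})`, which
target auxiliary arguments; hence every set of facts is conflict-free, and a fact `s` is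
defended against its unique attackers `{a_{ℓ,s}}` exactly when some support of `s` lies in `P`. -/

section SupportSetaf

variable {L Fact : Type} {src : L → Set Fact} {supp : L → Fact → Set (Set Fact)}

theorem att_image_inl_iff {U : Set Fact} {x : Arg src} :
    Att src supp (Sum.inl '' U) x ↔
      ∃ a : Aux src, x = Sum.inr a ∧ U ∈ supp a.1.1 a.1.2 := by
  constructor
  · rintro (⟨a, hU, -⟩ | ⟨a, V, hV, hUV, rfl⟩)
    · obtain ⟨u, -, hu⟩ : Sum.inr a ∈ (Sum.inl '' U : Set (Arg src)) := hU ▸ rfl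
      cases hu
    · exact ⟨a, rfl, Sum.inl_injective.image_injective hUV ▸ hV⟩
  · rintro ⟨a, rfl, hU⟩
    exact Or.inr ⟨a, U, hU, rfl, rfl⟩

theorem exists_subset_image_inl_att_iff {P : Set Fact} {x : Arg src} :
    (∃ S ⊆ Sum.inl '' P, Att src supp S x) ↔
      ∃ a : Aux src, x = Sum.inr a ∧ ∃ U ∈ supp a.1.1 a.1.2, U ⊆ P := by
  constructor
  · rintro ⟨S, hSP, hS⟩
    obtain ⟨U, hUP, rfl⟩ := Set.subset_image_iff.mp hSP
    obtain ⟨a, rfl, hU⟩ := att_image_inl_iff.mp hS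
    exact ⟨a, rfl, U, hU, hUP⟩
  · rintro ⟨a, rfl, U, hU, hUP⟩
    exact ⟨Sum.inl '' U, Set.image_mono hUP, att_image_inl_iff.mpr ⟨a, rfl, hU⟩⟩

theorem setafConflictFree_image_inl (P : Set Fact) :
    SetafConflictFree (Att src supp) (Sum.inl '' P) := by
  rintro ⟨S, x, hS, hSP, hxP⟩
  obtain ⟨a, rfl, -⟩ := exists_subset_image_inl_att_iff.mp ⟨S, hSP, hS⟩
  obtain ⟨s, -, hs⟩ := hxP
  cases hs

theorem setafDefends_image_inl_iff {P : Set Fact} {s : Fact} :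
    SetafDefends (Att src supp) (Sum.inl '' P) (Sum.inl s) ↔
      ∀ ℓ, s ∈ src ℓ → ∃ U ∈ supp ℓ s, U ⊆ P := by
  simp only [SetafDefends, att_inl_iff]
  constructor
  · intro hdef ℓ hs
    obtain ⟨S, hSP, b, rfl, hS⟩ := hdef _ ⟨⟨(ℓ, s), hs⟩, rfl, rfl⟩
    obtain ⟨a, ha, hU⟩ := exists_subset_image_inl_att_iff.mp ⟨S, hSP, hS⟩
    cases Sum.inr_injective ha
    exact hU
  · rintro hcl _ ⟨a, rfl, rfl⟩
    obtain ⟨S, hSP, hS⟩ :=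
      exists_subset_image_inl_att_iff.mpr ⟨a, rfl, hcl a.1.1 a.2⟩
    exact ⟨S, hSP, _, rfl, hS⟩

end SupportSetaf

theorem stmt11_general {L Fact : Type}
    (src : L → Set Fact) (supp : L → Fact → Set (Set Fact)) (P : Set Fact) :
    SetafAdmissible (Att src supp) ((Sum.inl : Fact → Arg src) '' P) ↔
      Closed src supp P := by
  rw [SetafAdmissible, and_iff_right (setafConflictFree_image_inl P)]
  constructor
  · intro hdef ℓ s hs
    exact setafDefends_image_inl_iff.mp (hdef _ ⟨s, hs, rfl⟩) ℓ
  · rintro hcl _ ⟨s, hs, rfl⟩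
    exact setafDefends_image_inl_iff.mpr fun ℓ => hcl ℓ s hs

/-- In the SETAF generated by a support system, a subset `P` of the facts is
admissible iff it is closed. -/
theorem stmt11 {L Fact : Type} [Fintype L] [Fintype Fact]
    (src : L → Set Fact) (supp : L → Fact → Set (Set Fact)) (P : Set Fact) :
    SetafAdmissible (Att src supp) ((Sum.inl : Fact → Arg src) '' P) ↔
      Closed src supp P :=
  stmt11_general src supp P
end

section
/- If in a support system (T, L, src, supp) the maximal closed set P* satisfies: for every s ∈ P* and every ℓ with s ∈ src(ℓ), supp(ℓ,s) ∩ 𝒫(P*) ≠ ∅, and additionally every fact in T ∖ P* has been removed by pre-processing (i.e., T = P* after pre-processing), then in the resulting SETAF the set P* of non-self-attacking arguments is simultaneously the unique naive, the unique stable, and the unique preferred extension. -/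
/-!
Every auxiliary argument `a_{ℓ,s}` attacks itself, so conflict-free sets contain only facts,
while the facts themselves are conflict-free because every attack either targets or is carried
by an auxiliary argument. Since every fact is supported, each `a_{ℓ,s}` is attacked by a support
of `s`, so the facts form a stable extension. A stable extension containing every conflict-free
set is the unique naive, stable and preferred extension.
-/

section Setaf

variable {A : Type} {R : Set A → A → Prop} {E F : Set A}

theorem SetafStable.setafAdmissible (hF : SetafStable R F) : SetafAdmissible R F := by
  refine ⟨hF.1, fun a ha S hSa => ?_⟩
  obtain ⟨b, hbS, hbF⟩ : ∃ b ∈ S, b ∉ F := by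
    by_contra! hSF
    exact hF.1 ⟨S, a, hSa, hSF, ha⟩
  obtain ⟨S', hS'F, hS'b⟩ := hF.2 b hbF
  exact ⟨S', hS'F, b, hbS, hS'b⟩

theorem SetafStable.setafNaive (hF : SetafStable R F) : SetafNaive R F := by
  refine ⟨hF.1, fun E' hE' hFE' => (hFE'.antisymm fun a haE' => ?_).symm⟩
  by_contra haF
  obtain ⟨S, hSF, hSa⟩ := hF.2 a haF
  exact hE' ⟨S, a, hSa, hSF.trans hFE', haE'⟩

variable (hgreatest : ∀ E, SetafConflictFree R E → E ⊆ F)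
include hgreatest

theorem setafNaive_iff_eq_of_greatest (hF : SetafConflictFree R F) :
    SetafNaive R E ↔ E = F := by
  refine ⟨fun hE => (hE.2 F hF (hgreatest E hE.1)).symm, ?_⟩
  rintro rfl
  exact ⟨hF, fun E' hE' hFE' => (hgreatest E' hE').antisymm hFE'⟩

theorem setafStable_iff_eq_of_greatest (hF : SetafStable R F) : SetafStable R E ↔ E = F := by
  refine ⟨fun hE => (setafNaive_iff_eq_of_greatest hgreatest hF.1).1 hE.setafNaive, ?_⟩
  rintro rfl
  exact hF

theorem setafPreferred_iff_eq_of_greatest (hF : SetafStable R F) :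
    SetafPreferred R E ↔ E = F := by
  refine ⟨fun hE => (hE.2 F hF.setafAdmissible (hgreatest E hE.1.1)).symm, ?_⟩
  rintro rfl
  exact ⟨hF.setafAdmissible, fun E' hE' hFE' => (hgreatest E' hE'.1).antisymm hFE'⟩

end Setaf

section SupportSystem

variable {L Fact : Type} {src : L → Set Fact} {supp : L → Fact → Set (Set Fact)}

theorem att_singleton_inr_self (a : Aux src) : Att src supp {Sum.inr a} (Sum.inr a) :=
  Or.inl ⟨a, rfl, Or.inl rfl⟩

theorem subset_range_inl_of_setafConflictFree {E : Set (Arg src)}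
    (hE : SetafConflictFree (Att src supp) E) : E ⊆ Set.range Sum.inl := by
  rintro (s | a) ha
  · exact ⟨s, rfl⟩
  · exact (hE ⟨_, _, att_singleton_inr_self a, Set.singleton_subset_iff.2 ha, ha⟩).elim

theorem setafConflictFree_range_inl :
    SetafConflictFree (Att src supp) (Set.range Sum.inl) := by
  rintro ⟨S, x, ⟨a, rfl, -⟩ | ⟨a, U, -, -, rfl⟩, hS, hx⟩
  · obtain ⟨s, hs⟩ := hS (Set.mem_singleton (Sum.inr a))
    exact Sum.inl_ne_inr hs
  · obtain ⟨s, hs⟩ := hx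
    exact Sum.inl_ne_inr hs

theorem setafStable_range_inl (hsupp : ∀ ℓ, ∀ s ∈ src ℓ, (supp ℓ s).Nonempty) :
    SetafStable (Att src supp) (Set.range Sum.inl) := by
  refine ⟨setafConflictFree_range_inl, ?_⟩
  rintro (s | a) ha
  · exact (ha ⟨s, rfl⟩).elim
  · obtain ⟨U, hU⟩ := hsupp a.1.1 a.1.2 a.2
    exact ⟨Sum.inl '' U, Set.image_subset_range _ _, Or.inr ⟨a, U, hU, rfl, rfl⟩⟩

end SupportSystem

theorem stmt12_general {L Fact : Type}
    (src : L → Set Fact) (supp : L → Fact → Set (Set Fact))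
    (hpre : ∀ ℓ, ∀ s ∈ src ℓ, ∃ S ∈ supp ℓ s, S ⊆ (Set.univ : Set Fact)) :
    (SetafNaive (Att src supp) (Set.range (Sum.inl : Fact → Arg src)) ∧
      ∀ E, SetafNaive (Att src supp) E → E = Set.range (Sum.inl : Fact → Arg src)) ∧
    (SetafStable (Att src supp) (Set.range (Sum.inl : Fact → Arg src)) ∧
      ∀ E, SetafStable (Att src supp) E → E = Set.range (Sum.inl : Fact → Arg src)) ∧
    (SetafPreferred (Att src supp) (Set.range (Sum.inl : Fact → Arg src)) ∧
      ∀ E, SetafPreferred (Att src supp) E → E = Set.range (Sum.inl : Fact → Arg src)) := by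
  have hF : SetafStable (Att src supp) (Set.range Sum.inl) :=
    setafStable_range_inl fun ℓ s hs => (hpre ℓ s hs).imp fun _ h => h.1
  have hgreatest : ∀ E, SetafConflictFree (Att src supp) E → E ⊆ Set.range Sum.inl :=
    fun _ => subset_range_inl_of_setafConflictFree
  exact ⟨⟨(setafNaive_iff_eq_of_greatest hgreatest hF.1).2 rfl,
      fun _ => (setafNaive_iff_eq_of_greatest hgreatest hF.1).1⟩,
    ⟨(setafStable_iff_eq_of_greatest hgreatest hF).2 rfl,
      fun _ => (setafStable_iff_eq_of_greatest hgreatest hF).1⟩,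
    ⟨(setafPreferred_iff_eq_of_greatest hgreatest hF).2 rfl,
      fun _ => (setafPreferred_iff_eq_of_greatest hgreatest hF).1⟩⟩

/-- After pre-processing (every fact is supported within the database), the set
of non-self-attacking arguments (the facts) is simultaneously the unique naive,
the unique stable, and the unique preferred extension of the generated SETAF. -/
theorem stmt12 {L Fact : Type} [Fintype L] [Fintype Fact]
    (src : L → Set Fact) (supp : L → Fact → Set (Set Fact))
    (hpre : ∀ ℓ, ∀ s ∈ src ℓ, ∃ S ∈ supp ℓ s, S ⊆ (Set.univ : Set Fact)) :
    (SetafNaive (Att src supp) (Set.range (Sum.inl : Fact → Arg src)) ∧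
      ∀ E, SetafNaive (Att src supp) E → E = Set.range (Sum.inl : Fact → Arg src)) ∧
    (SetafStable (Att src supp) (Set.range (Sum.inl : Fact → Arg src)) ∧
      ∀ E, SetafStable (Att src supp) E → E = Set.range (Sum.inl : Fact → Arg src)) ∧
    (SetafPreferred (Att src supp) (Set.range (Sum.inl : Fact → Arg src)) ∧
      ∀ E, SetafPreferred (Att src supp) E → E = Set.range (Sum.inl : Fact → Arg src)) :=
  stmt12_general src supp hpre
end

section
/- In any SETAF, if E1 and E2 are admissible sets and E1 ∪ E2 is conflict-free, then E1 ∪ E2 is admissible; consequently, in the support-system SETAF where all admissible sets are subsets of T and the union of closed sets is closed, the union of all admissible sets is the unique preferred extension. -/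
/-! Defense is monotone in the defending set, so a union of admissible sets defends each of its
members and is admissible as soon as it is conflict-free. In the SETAF of a support system every
attack has an auxiliary argument as its target or as its (singleton) attacker, and auxiliary
arguments attack themselves; hence the conflict-free sets are exactly the sets of facts, and the union
of all admissible sets is admissible. -/

section Setaf

variable {A : Type} {R : Set A → A → Prop}

theorem SetafDefends.mono {E E' : Set A} {a : A} (h : SetafDefends R E a) (hEE' : E ⊆ E') :
    SetafDefends R E' a := fun S hS =>
  let ⟨S', hS'E, b, hbS, hS'b⟩ := h S hS
  ⟨S', hS'E.trans hEE', b, hbS, hS'b⟩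

theorem SetafAdmissible.sUnion {𝓔 : Set (Set A)} (h𝓔 : ∀ E ∈ 𝓔, SetafAdmissible R E)
    (hcf : SetafConflictFree R (⋃₀ 𝓔)) : SetafAdmissible R (⋃₀ 𝓔) := by
  refine ⟨hcf, fun a ⟨E, hE, haE⟩ => ?_⟩
  exact ((h𝓔 E hE).2 a haE).mono (Set.subset_sUnion_of_mem hE)

theorem SetafAdmissible.union {E₁ E₂ : Set A} (h₁ : SetafAdmissible R E₁)
    (h₂ : SetafAdmissible R E₂) (hcf : SetafConflictFree R (E₁ ∪ E₂)) :
    SetafAdmissible R (E₁ ∪ E₂) := by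
  rw [← Set.sUnion_pair] at hcf ⊢
  exact SetafAdmissible.sUnion (by rintro E (rfl | rfl) <;> assumption) hcf

theorem SetafAdmissible.subset_sUnion_admissible {E : Set A} (hE : SetafAdmissible R E) :
    E ⊆ ⋃₀ {E : Set A | SetafAdmissible R E} :=
  Set.subset_sUnion_of_mem hE

theorem setafPreferred_sUnion_admissible
    (hadm : SetafAdmissible R (⋃₀ {E : Set A | SetafAdmissible R E})) :
    SetafPreferred R (⋃₀ {E : Set A | SetafAdmissible R E}) :=
  ⟨hadm, fun _ hE' hsub => hsub.antisymm' hE'.subset_sUnion_admissible⟩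

theorem SetafPreferred.eq_sUnion_admissible {E : Set A} (hE : SetafPreferred R E)
    (hadm : SetafAdmissible R (⋃₀ {E : Set A | SetafAdmissible R E})) :
    E = ⋃₀ {E : Set A | SetafAdmissible R E} :=
  (hE.2 _ hadm hE.1.subset_sUnion_admissible).symm

end Setaf

section SupportSystem

variable {L Fact : Type} {src : L → Set Fact} {supp : L → Fact → Set (Set Fact)}

theorem setafConflictFree_att_iff {E : Set (Arg src)} :
    SetafConflictFree (Att src supp) E ↔ ∀ a : Aux src, Sum.inr a ∉ E := by
  constructor
  · intro hcf a ha
    exact hcf ⟨{Sum.inr a}, Sum.inr a, Or.inl ⟨a, rfl, Or.inl rfl⟩,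
      Set.singleton_subset_iff.mpr ha, ha⟩
  · rintro hE ⟨S, x, hatt | ⟨a, -, -, -, rfl⟩, hSE, hxE⟩
    · obtain ⟨a, rfl, -⟩ := hatt
      exact hE a (hSE rfl)
    · exact hE a hxE

theorem setafConflictFree_att_sUnion_admissible :
    SetafConflictFree (Att src supp) (⋃₀ {E | SetafAdmissible (Att src supp) E}) := by
  rw [setafConflictFree_att_iff]
  rintro a ⟨E, hE, haE⟩
  exact setafConflictFree_att_iff.mp hE.1 a haE

end SupportSystem

/-- In any SETAF the union of two admissible sets is admissible provided it is
conflict-free; consequently, in the SETAF generated by a support system the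
union of all admissible sets is the unique preferred extension. -/
theorem stmt19 :
    (∀ (A : Type) (R : Set A → A → Prop) (E1 E2 : Set A),
      SetafAdmissible R E1 → SetafAdmissible R E2 →
      SetafConflictFree R (E1 ∪ E2) → SetafAdmissible R (E1 ∪ E2)) ∧
    (∀ (L Fact : Type) (src : L → Set Fact) (supp : L → Fact → Set (Set Fact)),
      SetafPreferred (Att src supp) (⋃₀ {E : Set (Arg src) | SetafAdmissible (Att src supp) E}) ∧
      ∀ E, SetafPreferred (Att src supp) E →
        E = ⋃₀ {E : Set (Arg src) | SetafAdmissible (Att src supp) E}) := by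
  refine ⟨fun _ _ _ _ => SetafAdmissible.union, fun L Fact src supp => ?_⟩
  have hadm : SetafAdmissible (Att src supp) (⋃₀ {E | SetafAdmissible (Att src supp) E}) :=
    SetafAdmissible.sUnion (fun _ hE => hE) setafConflictFree_att_sUnion_admissible
  exact ⟨setafPreferred_sUnion_admissible hadm, fun _ hE => hE.eq_sUnion_admissible hadm⟩
end
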